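/- arXiv:2603.27686 — 2 statements merged into one kernel-verified Lean document; each statement's English description precedes it below -/
import Mathlib

section
/- Weighted Cesàro convergence: let (bₖ)ₖ≥1 be a bounded sequence of complex numbers such that (1/n)·∑_{k=1}^{n} bₖ → L as n → ∞, and let g : [0,1] → ℂ be continuously differentiable. Then (1/n)·∑_{k=1}^{n} bₖ·g(k/n) → L·∫₀¹ g(x) dx as n → ∞. -/
/-!
Since `g` is `C¹` on `[0, 1]`, it is `K`-Lipschitz there. Write `bₖ = L + cₖ`. The `L`-part is
`L` times a Riemann sum of `g`, which is within `K / n` of `∫₀¹ g`. The partial sums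
`Tₘ = ∑_{k ≤ m} cₖ` are `o(m)` by hypothesis, and summation by parts bounds the `c`-part by
`‖g 1‖ ‖Tₙ‖ + (K / n) ∑_{i < n} ‖Tᵢ‖ = o(n)`, because `g` moves by at most `K / n` between
consecutive nodes `i / n`.
-/

open Filter Finset Asymptotics Topology NNReal

theorem Finset.sum_Icc_one_eq_sum_range {M : Type*} [AddCommMonoid M] (f : ℕ → M) (n : ℕ) :
    ∑ k ∈ Icc 1 n, f k = ∑ i ∈ range n, f (i + 1) := by
  induction n with
  | zero => rfl
  | succ n ih => rw [sum_Icc_succ_top (by omega), sum_range_succ, ih]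

theorem Finset.sum_Icc_one_smul_by_parts {R M : Type*} [Ring R] [AddCommGroup M] [Module R M]
    (f : ℕ → R) (c : ℕ → M) (n : ℕ) :
    ∑ k ∈ Icc 1 n, f k • c k = f n • ∑ k ∈ Icc 1 n, c k
      - ∑ i ∈ range n, (f (i + 1) - f i) • ∑ k ∈ Icc 1 i, c k := by
  induction n with
  | zero => simp
  | succ n ih =>
    rw [sum_Icc_succ_top (by omega), sum_Icc_succ_top (by omega), sum_range_succ, ih, smul_add,
      sub_smul]
    abel

theorem Asymptotics.IsLittleO.sum_range_natCast_sq {E : Type*} [NormedAddCommGroup E]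
    {u : ℕ → E} (hu : u =o[atTop] fun n => (n : ℝ)) :
    (fun n => ∑ i ∈ range n, u i) =o[atTop] fun n => (n : ℝ) ^ 2 := by
  have h_tendsto : Tendsto (fun n => ∑ i ∈ range n, (i : ℝ)) atTop atTop :=
    tendsto_atTop_atTop.2 fun b => ⟨⌈b⌉₊ + 1, fun n hn => (Nat.le_ceil b).trans
      (single_le_sum (fun i _ => Nat.cast_nonneg i) (mem_range.2 (by omega)))⟩
  refine (hu.sum_range (fun i => Nat.cast_nonneg i) h_tendsto).trans_isBigO ?_
  refine IsBigO.of_bound 1 (Eventually.of_forall fun n => ?_)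
  rw [Real.norm_of_nonneg (sum_nonneg fun i _ => Nat.cast_nonneg i), one_mul, Real.norm_of_nonneg
    (by positivity), sq]
  calc ∑ i ∈ range n, (i : ℝ) ≤ ∑ _i ∈ range n, (n : ℝ) :=
        sum_le_sum fun i hi => by exact_mod_cast (mem_range.1 hi).le
    _ = n * n := by rw [sum_const, card_range, nsmul_eq_mul]

section Lipschitz

variable {E : Type*} [NormedAddCommGroup E] [NormedSpace ℝ E] {g : ℝ → E} {K : ℝ≥0}

theorem LipschitzOnWith.norm_smul_sub_integral_le [CompleteSpace E] {a b : ℝ} (hab : a ≤ b)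
    (hg : LipschitzOnWith K g (Set.Icc a b)) :
    ‖(b - a) • g b - ∫ x in a..b, g x‖ ≤ K * (b - a) ^ 2 := by
  have hint : IntervalIntegrable g MeasureTheory.volume a b :=
    (hg.continuousOn.mono (Set.uIcc_of_le hab).subset).intervalIntegrable
  rw [← intervalIntegral.integral_const,
    ← intervalIntegral.integral_sub intervalIntegrable_const hint]
  have hbound : ∀ x ∈ Set.uIoc a b, ‖g b - g x‖ ≤ K * (b - a) := by
    intro x hx
    rw [Set.uIoc_of_le hab] at hx
    calc ‖g b - g x‖ ≤ K * ‖b - x‖ :=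
          hg.norm_sub_le (Set.right_mem_Icc.2 hab) (Set.Ioc_subset_Icc_self hx)
      _ ≤ K * (b - a) := by
        rw [Real.norm_of_nonneg (by linarith [hx.2])]
        exact mul_le_mul_of_nonneg_left (by linarith [hx.1]) K.coe_nonneg
  calc _ ≤ K * (b - a) * |b - a| := intervalIntegral.norm_integral_le_of_norm_le_const hbound
    _ = K * (b - a) ^ 2 := by rw [abs_of_nonneg (by linarith)]; ring

theorem LipschitzOnWith.norm_riemannSum_sub_integral_le [CompleteSpace E]
    (hg : LipschitzOnWith K g (Set.Icc 0 1)) {n : ℕ} (hn : n ≠ 0) :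
    ‖(n : ℝ)⁻¹ • ∑ k ∈ Icc 1 n, g (k / n) - ∫ x in (0 : ℝ)..1, g x‖ ≤ K / n := by
  have hn' : (0 : ℝ) < n := by positivity
  set a : ℕ → ℝ := fun i => i / n
  have ha_mem : ∀ i ≤ n, a i ∈ Set.Icc (0 : ℝ) 1 := fun i hi =>
    ⟨by positivity, (div_le_one hn').2 (by exact_mod_cast hi)⟩
  have ha_step : ∀ i, a (i + 1) - a i = (n : ℝ)⁻¹ := fun i => by
    simp only [a]; push_cast; field_simp; ring
  have ha_mono : ∀ i, a i ≤ a (i + 1) := fun i => by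
    linarith [ha_step i, inv_pos.2 hn']
  have hsub : ∀ i < n, Set.Icc (a i) (a (i + 1)) ⊆ Set.Icc 0 1 := fun i hi =>
    Set.Icc_subset_Icc (ha_mem i hi.le).1 (ha_mem (i + 1) hi).2
  have hsum : (n : ℝ)⁻¹ • ∑ k ∈ Icc 1 n, g (k / n)
      = ∑ i ∈ range n, (a (i + 1) - a i) • g (a (i + 1)) := by
    rw [sum_Icc_one_eq_sum_range, smul_sum]
    exact sum_congr rfl fun i _ => by rw [ha_step]
  have hint : ∫ x in (0 : ℝ)..1, g x = ∑ i ∈ range n, ∫ x in a i..a (i + 1), g x := by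
    rw [intervalIntegral.sum_integral_adjacent_intervals fun i hi =>
      (hg.continuousOn.mono ((Set.uIcc_of_le (ha_mono i)).trans_subset
        (hsub i hi))).intervalIntegrable]
    simp [a, hn]
  rw [hsum, hint, ← sum_sub_distrib]
  calc _ ≤ ∑ i ∈ range n, (K : ℝ) * (n : ℝ)⁻¹ ^ 2 := by
        refine (norm_sum_le _ _).trans (sum_le_sum fun i hi => ?_)
        rw [← ha_step i]
        exact (hg.mono (hsub i (mem_range.1 hi))).norm_smul_sub_integral_le (ha_mono i)
    _ = K / n := by rw [sum_const, card_range, nsmul_eq_mul]; field_simp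

theorem LipschitzOnWith.tendsto_riemannSum [CompleteSpace E]
    (hg : LipschitzOnWith K g (Set.Icc 0 1)) :
    Tendsto (fun n : ℕ => (n : ℝ)⁻¹ • ∑ k ∈ Icc 1 n, g (k / n)) atTop
      (𝓝 (∫ x in (0 : ℝ)..1, g x)) := by
  rw [tendsto_iff_norm_sub_tendsto_zero]
  refine squeeze_zero' (Eventually.of_forall fun n => norm_nonneg _) ?_
    (tendsto_const_div_atTop_nhds_zero_nat (K : ℝ))
  filter_upwards [eventually_ne_atTop 0] with n hn
  exact hg.norm_riemannSum_sub_integral_le hn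

end Lipschitz

section SummationByParts

variable {𝕜 E : Type*} [NormedField 𝕜] [SeminormedAddCommGroup E] [NormedSpace 𝕜 E]
  {g : ℝ → 𝕜} {K : ℝ≥0}

theorem LipschitzOnWith.norm_sum_smul_le (hg : LipschitzOnWith K g (Set.Icc 0 1)) (c : ℕ → E)
    {n : ℕ} (hn : n ≠ 0) :
    ‖∑ k ∈ Icc 1 n, g (k / n) • c k‖ ≤ ‖g 1‖ * ‖∑ k ∈ Icc 1 n, c k‖
      + K * ((∑ i ∈ range n, ‖∑ k ∈ Icc 1 i, c k‖) / n) := by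
  have hn' : (0 : ℝ) < n := by positivity
  have hmem : ∀ i ≤ n, (i : ℝ) / n ∈ Set.Icc (0 : ℝ) 1 := fun i hi =>
    ⟨by positivity, (div_le_one hn').2 (by exact_mod_cast hi)⟩
  have hstep : ∀ i < n, ‖g ((i + 1 : ℕ) / n) - g (i / n)‖ ≤ K / n := fun i hi => by
    have hgap : ((i + 1 : ℕ) : ℝ) / n - i / n = (n : ℝ)⁻¹ := by push_cast; field_simp; ring
    refine (hg.norm_sub_le (hmem (i + 1) hi) (hmem i hi.le)).trans_eq ?_
    rw [hgap, norm_inv, Real.norm_natCast, div_eq_mul_inv]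
  rw [sum_Icc_one_smul_by_parts (fun k => g (k / n)), div_self hn'.ne']
  refine (_root_.norm_sub_le _ _).trans (add_le_add (norm_smul_le _ _) ?_)
  calc _ ≤ ∑ i ∈ range n, K / n * ‖∑ k ∈ Icc 1 i, c k‖ :=
        (norm_sum_le _ _).trans <| sum_le_sum fun i hi => (norm_smul_le _ _).trans <|
          mul_le_mul_of_nonneg_right (hstep i (mem_range.1 hi)) (norm_nonneg _)
    _ = K * ((∑ i ∈ range n, ‖∑ k ∈ Icc 1 i, c k‖) / n) := by
        rw [← mul_sum]; ring

theorem LipschitzOnWith.isLittleO_sum_smul (hg : LipschitzOnWith K g (Set.Icc 0 1)) {c : ℕ → E}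
    (hc : (fun n => ∑ k ∈ Icc 1 n, c k) =o[atTop] fun n => (n : ℝ)) :
    (fun n : ℕ => ∑ k ∈ Icc 1 n, g (k / n) • c k) =o[atTop] fun n => (n : ℝ) := by
  have hbound : (fun n : ℕ => ∑ k ∈ Icc 1 n, g (k / n) • c k) =O[atTop] fun n =>
      ‖g 1‖ * ‖∑ k ∈ Icc 1 n, c k‖ + K * ((∑ i ∈ range n, ‖∑ k ∈ Icc 1 i, c k‖) / n) := by
    refine IsBigO.of_bound 1 ?_
    filter_upwards [eventually_ne_atTop 0] with n hn
    exact (hg.norm_sum_smul_le c hn).trans (by rw [one_mul]; exact Real.le_norm_self _)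
  have hsum : (fun n : ℕ => (∑ i ∈ range n, ‖∑ k ∈ Icc 1 i, c k‖) / n) =o[atTop]
      fun n => (n : ℝ) := by
    simpa only [div_eq_mul_inv, sq, mul_self_mul_inv] using
      hc.norm_left.sum_range_natCast_sq.mul_isBigO (isBigO_refl (fun n : ℕ => (n : ℝ)⁻¹) atTop)
  exact hbound.trans_isLittleO
    ((hc.norm_left.const_mul_left ‖g 1‖).add (hsum.const_mul_left (K : ℝ)))

end SummationByParts

theorem isLittleO_sum_sub_of_tendsto_average {E : Type*} [NormedAddCommGroup E]
    [NormedSpace ℝ E] {c : ℕ → E} {L : E}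
    (h : Tendsto (fun n : ℕ => (n : ℝ)⁻¹ • ∑ k ∈ Icc 1 n, c k) atTop (𝓝 L)) :
    (fun n : ℕ => ∑ k ∈ Icc 1 n, (c k - L)) =o[atTop] fun n => (n : ℝ) := by
  rw [← isLittleOTVS_iff_isLittleO (𝕜 := ℝ), isLittleOTVS_iff_tendsto_inv_smul
    (Eventually.of_forall fun n hn => by simp [Nat.cast_eq_zero.1 hn])]
  refine (sub_self L ▸ h.sub_const L).congr' ?_
  filter_upwards [eventually_ne_atTop 0] with n hn
  rw [sum_sub_distrib, sum_const, Nat.card_Icc, add_tsub_cancel_right, smul_sub,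
    ← Nat.cast_smul_eq_nsmul ℝ, smul_smul, inv_mul_cancel₀ (by exact_mod_cast hn), one_smul]

theorem weighted_cesaro_general (b : ℕ → ℂ) (L : ℂ)
    (hL : Tendsto (fun n : ℕ => (1 / (n : ℂ)) * ∑ k ∈ Finset.Icc 1 n, b k) atTop (nhds L))
    (g : ℝ → ℂ) (hg : ContDiffOn ℝ 1 g (Set.Icc 0 1)) :
    Tendsto (fun n : ℕ => (1 / (n : ℂ)) * ∑ k ∈ Finset.Icc 1 n, b k * g ((k : ℝ) / n))
      atTop (nhds (L * ∫ x in (0:ℝ)..1, g x)) := by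
  obtain ⟨K, hK⟩ := hg.exists_lipschitzOnWith one_ne_zero (convex_Icc 0 1) isCompact_Icc
  have hsmul : ∀ (n : ℕ) (z : ℂ), 1 / (n : ℂ) * z = (n : ℝ)⁻¹ • z := fun n z => by
    rw [Complex.real_smul]; push_cast; ring
  have hsplit : ∀ n : ℕ, (n : ℝ)⁻¹ • ∑ k ∈ Icc 1 n, b k * g (k / n)
      = L * ((n : ℝ)⁻¹ • ∑ k ∈ Icc 1 n, g (k / n))
        + (n : ℝ)⁻¹ • ∑ k ∈ Icc 1 n, g (k / n) • (b k - L) := fun n => by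
    rw [mul_smul_comm, ← smul_add, mul_sum, ← sum_add_distrib]
    simp only [smul_eq_mul]
    congr 1
    exact sum_congr rfl fun k _ => by ring
  simp only [hsmul, hsplit] at hL ⊢
  simpa using (hK.tendsto_riemannSum.const_mul L).add
    (hK.isLittleO_sum_smul (isLittleO_sum_sub_of_tendsto_average hL)).tendsto_inv_smul_nhds_zero

theorem weighted_cesaro (b : ℕ → ℂ) (M : ℝ) (hb : ∀ k, ‖b k‖ ≤ M) (L : ℂ)
    (hL : Tendsto (fun n : ℕ => (1 / (n : ℂ)) * ∑ k ∈ Finset.Icc 1 n, b k) atTop (nhds L))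
    (g : ℝ → ℂ) (hg : ContDiffOn ℝ 1 g (Set.Icc 0 1)) :
    Tendsto (fun n : ℕ => (1 / (n : ℂ)) * ∑ k ∈ Finset.Icc 1 n, b k * g ((k : ℝ) / n))
      atTop (nhds (L * ∫ x in (0:ℝ)..1, g x)) :=
  weighted_cesaro_general b L hL g hg
end

section
/- Approximate fixed point estimate: let f(w) = w + w² + a·w³ + O(w⁴) be holomorphic near 0, let σ be a bounded complex parameter, and set ε² := π²/n² + 2π²σ/n³ + O(n^{−3−α}) with 0 < α < 1. Define ζ^± := ±iπ/n + aπ²/(2n²). Then f(ζ^±) + ε² = ζ^± + 2π²σ/n³ + O(n^{−3−α}) as n → ∞, with a uniform constant in the error term. -/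
/-!
Write `ζ = q u + a p² u² / 2` with `u = 1/n`, `p = π` and `q = ±iπ`, so that `q² = -p²`. Then the
cubic truncation satisfies `ζ² + a ζ³ + p² u² = O(u⁴)`: the quadratic correction `a p² u² / 2` is
chosen exactly so that the `u³` terms cancel. Hence `f ζ - ζ + π²/n² = O(n⁻⁴)`, and adding the
expansion of `ε²` leaves the error `O(n^{-3-α})` because `α ≤ 1`.
-/

open Real Filter

lemma norm_eq_of_sq_eq_neg_sq {p q : ℂ} (hq : q ^ 2 = -p ^ 2) : ‖q‖ = ‖p‖ := by
  have h : ‖q‖ ^ 2 = ‖p‖ ^ 2 := by rw [← norm_pow, hq, norm_neg, norm_pow]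
  exact (pow_left_inj₀ (norm_nonneg q) (norm_nonneg p) two_ne_zero).1 h

lemma norm_mul_add_mul_sq_le (q b u : ℂ) (hu : ‖u‖ ≤ 1) :
    ‖q * u + b * u ^ 2‖ ≤ (‖q‖ + ‖b‖) * ‖u‖ := by
  have hu2 : ‖u‖ ^ 2 ≤ ‖u‖ := pow_le_of_le_one (norm_nonneg u) hu two_ne_zero
  calc ‖q * u + b * u ^ 2‖ ≤ ‖q * u‖ + ‖b * u ^ 2‖ := norm_add_le _ _
    _ = ‖q‖ * ‖u‖ + ‖b‖ * ‖u‖ ^ 2 := by rw [norm_mul, norm_mul, norm_pow]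
    _ ≤ ‖q‖ * ‖u‖ + ‖b‖ * ‖u‖ := by gcongr
    _ = (‖q‖ + ‖b‖) * ‖u‖ := by ring

lemma sq_add_mul_cube_add_sq_mul_sq (a p q u : ℂ) (hq : q ^ 2 = -p ^ 2) :
    (q * u + a * p ^ 2 * u ^ 2 / 2) ^ 2 + a * (q * u + a * p ^ 2 * u ^ 2 / 2) ^ 3 + p ^ 2 * u ^ 2
      = u ^ 4 * ((-10 * a ^ 2 * p ^ 4 + 6 * a ^ 3 * q * p ^ 4 * u + a ^ 4 * p ^ 6 * u ^ 2) / 8) := by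
  linear_combination (u ^ 2 + a * q * u ^ 3 + 3 * a ^ 2 * p ^ 2 * u ^ 4 / 2) * hq

lemma norm_quartic_coeff_le (a p q u : ℂ) (hq : ‖q‖ = ‖p‖) (hu : ‖u‖ ≤ 1) :
    ‖(-10 * a ^ 2 * p ^ 4 + 6 * a ^ 3 * q * p ^ 4 * u + a ^ 4 * p ^ 6 * u ^ 2) / 8‖
      ≤ (10 * ‖a‖ ^ 2 * ‖p‖ ^ 4 + 6 * ‖a‖ ^ 3 * ‖p‖ ^ 5 + ‖a‖ ^ 4 * ‖p‖ ^ 6) / 8 := by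
  have hu2 : ‖u‖ ^ 2 ≤ 1 := pow_le_one₀ (norm_nonneg u) hu
  have h8 : ‖(8 : ℂ)‖ = 8 := by norm_num
  have h10 : ‖(-10 : ℂ)‖ = 10 := by norm_num
  have h6 : ‖(6 : ℂ)‖ = 6 := by norm_num
  rw [norm_div, h8]
  gcongr
  calc _ ≤ ‖-10 * a ^ 2 * p ^ 4‖ + ‖6 * a ^ 3 * q * p ^ 4 * u‖ + ‖a ^ 4 * p ^ 6 * u ^ 2‖ :=
        norm_add₃_le
    _ = 10 * ‖a‖ ^ 2 * ‖p‖ ^ 4 + 6 * ‖a‖ ^ 3 * ‖p‖ ^ 5 * ‖u‖ + ‖a‖ ^ 4 * ‖p‖ ^ 6 * ‖u‖ ^ 2 := by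
        simp only [norm_mul, norm_pow, hq, h10, h6]
        ring
    _ ≤ 10 * ‖a‖ ^ 2 * ‖p‖ ^ 4 + 6 * ‖a‖ ^ 3 * ‖p‖ ^ 5 * 1 + ‖a‖ ^ 4 * ‖p‖ ^ 6 * 1 := by gcongr
    _ = _ := by ring

lemma norm_apply_sub_add_sq_mul_sq_le {f : ℂ → ℂ} {a : ℂ} {r C₀ : ℝ} (hC₀ : 0 ≤ C₀)
    (hexp : ∀ w : ℂ, ‖w‖ < r → ‖f w - (w + w ^ 2 + a * w ^ 3)‖ ≤ C₀ * ‖w‖ ^ 4)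
    {p q u : ℂ} (hq : q ^ 2 = -p ^ 2) (hu : ‖u‖ ≤ 1)
    (hur : (‖p‖ + ‖a‖ * ‖p‖ ^ 2 / 2) * ‖u‖ < r) :
    ‖f (q * u + a * p ^ 2 * u ^ 2 / 2) - (q * u + a * p ^ 2 * u ^ 2 / 2) + p ^ 2 * u ^ 2‖
      ≤ (C₀ * (‖p‖ + ‖a‖ * ‖p‖ ^ 2 / 2) ^ 4
          + (10 * ‖a‖ ^ 2 * ‖p‖ ^ 4 + 6 * ‖a‖ ^ 3 * ‖p‖ ^ 5 + ‖a‖ ^ 4 * ‖p‖ ^ 6) / 8) * ‖u‖ ^ 4 := by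
  set ζ := q * u + a * p ^ 2 * u ^ 2 / 2
  have hqp : ‖q‖ = ‖p‖ := norm_eq_of_sq_eq_neg_sq hq
  have hζ : ‖ζ‖ ≤ (‖p‖ + ‖a‖ * ‖p‖ ^ 2 / 2) * ‖u‖ := by
    have h := norm_mul_add_mul_sq_le q (a * p ^ 2 / 2) u hu
    have h2 : ‖(2 : ℂ)‖ = 2 := by norm_num
    rw [norm_div, norm_mul, norm_pow, h2, hqp] at h
    convert h using 2
    ring
  have hcubic := hexp ζ (hζ.trans_lt hur)
  have hquartic := norm_quartic_coeff_le a p q u hqp hu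
  calc ‖f ζ - ζ + p ^ 2 * u ^ 2‖
      = ‖(f ζ - (ζ + ζ ^ 2 + a * ζ ^ 3)) + (ζ ^ 2 + a * ζ ^ 3 + p ^ 2 * u ^ 2)‖ := by ring_nf
    _ ≤ C₀ * ‖ζ‖ ^ 4 + ‖u‖ ^ 4
          * ((10 * ‖a‖ ^ 2 * ‖p‖ ^ 4 + 6 * ‖a‖ ^ 3 * ‖p‖ ^ 5 + ‖a‖ ^ 4 * ‖p‖ ^ 6) / 8) := by
        refine (norm_add_le _ _).trans (add_le_add hcubic ?_)
        rw [sq_add_mul_cube_add_sq_mul_sq a p q u hq, norm_mul, norm_pow]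
        gcongr
    _ ≤ C₀ * ((‖p‖ + ‖a‖ * ‖p‖ ^ 2 / 2) * ‖u‖) ^ 4 + ‖u‖ ^ 4
          * ((10 * ‖a‖ ^ 2 * ‖p‖ ^ 4 + 6 * ‖a‖ ^ 3 * ‖p‖ ^ 5 + ‖a‖ ^ 4 * ‖p‖ ^ 6) / 8) := by
        gcongr
    _ = _ := by ring

lemma norm_apply_sub_add_pi_sq_div_sq_le {f : ℂ → ℂ} {a : ℂ} {r C₀ : ℝ} (hC₀ : 0 ≤ C₀)
    (hexp : ∀ w : ℂ, ‖w‖ < r → ‖f w - (w + w ^ 2 + a * w ^ 3)‖ ≤ C₀ * ‖w‖ ^ 4)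
    {n : ℕ} (hn : 1 ≤ (n : ℝ)) (hnr : (π + ‖a‖ * π ^ 2 / 2) / n < r) (s : Bool) :
    let ζ : ℂ := (if s then 1 else -1) * Complex.I * π / n + a * π ^ 2 / (2 * n ^ 2)
    ‖f ζ - ζ + π ^ 2 / n ^ 2‖
      ≤ (C₀ * (π + ‖a‖ * π ^ 2 / 2) ^ 4
          + (10 * ‖a‖ ^ 2 * π ^ 4 + 6 * ‖a‖ ^ 3 * π ^ 5 + ‖a‖ ^ 4 * π ^ 6) / 8) / n ^ 4 := by
  intro ζ
  have hnC : (n : ℂ) ≠ 0 := by exact_mod_cast (zero_lt_one.trans_le hn).ne'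
  have hu : ‖(n : ℂ)⁻¹‖ = (n : ℝ)⁻¹ := by simp
  have hp : ‖(π : ℂ)‖ = π := by simp [abs_of_pos pi_pos]
  have hq : ((if s then 1 else -1) * Complex.I * π) ^ 2 = -(π : ℂ) ^ 2 := by
    cases s <;> simp [mul_pow]
  have hdefect := norm_apply_sub_add_sq_mul_sq_le hC₀ hexp hq (u := (n : ℂ)⁻¹)
    (by rw [hu]; exact inv_le_one_of_one_le₀ hn) (by rw [hp, hu, ← div_eq_mul_inv]; exact hnr)
  rw [hp, hu] at hdefect
  have hζ : ζ = (if s then 1 else -1) * Complex.I * π * (n : ℂ)⁻¹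
      + a * π ^ 2 * (n : ℂ)⁻¹ ^ 2 / 2 := by
    simp only [ζ]; field_simp
  rw [hζ, div_eq_mul_inv _ ((n : ℂ) ^ 2), ← inv_pow]
  exact hdefect.trans_eq (by rw [inv_pow, ← div_eq_mul_inv])

theorem approximate_fixed_point_general (f : ℂ → ℂ) (a : ℂ) (r C₀ : ℝ) (hr : 0 < r) (hC₀ : 0 < C₀)
    (hexp : ∀ w : ℂ, ‖w‖ < r → ‖f w - (w + w^2 + a * w^3)‖ ≤ C₀ * ‖w‖^4)
    (σ : ℕ → ℂ)
    (α : ℝ) (hα1 : α < 1)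
    (ε2 : ℕ → ℂ) (C₁ : ℝ) (n₁ : ℕ)
    (hε : ∀ n ≥ n₁, ‖ε2 n - ((π : ℂ)^2 / n^2 + 2 * π^2 * σ n / n^3)‖ ≤ C₁ / (n : ℝ) ^ ((3 : ℝ) + α)) :
    ∃ C : ℝ, ∃ n₀ : ℕ, ∀ n ≥ n₀, ∀ s : Bool,
      let ζ : ℂ := (if s then 1 else -1) * Complex.I * π / n + a * π^2 / (2 * n^2)
      ‖f ζ + ε2 n - ζ - 2 * π^2 * σ n / n^3‖ ≤ C / (n : ℝ) ^ ((3 : ℝ) + α) := by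
  set A : ℝ := π + ‖a‖ * π ^ 2 / 2
  set B : ℝ := C₀ * A ^ 4 + (10 * ‖a‖ ^ 2 * π ^ 4 + 6 * ‖a‖ ^ 3 * π ^ 5 + ‖a‖ ^ 4 * π ^ 6) / 8
  have hsmall : ∀ᶠ n : ℕ in atTop, A / n < r :=
    (tendsto_const_div_atTop_nhds_zero_nat A).eventually (gt_mem_nhds hr)
  obtain ⟨n₀, hn₀⟩ := eventually_atTop.1 (hsmall.and (eventually_ge_atTop (max n₁ 1)))
  refine ⟨B + C₁, n₀, fun n hn s => ?_⟩
  obtain ⟨hnr, hn⟩ := hn₀ n hn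
  have hn1 : (1 : ℝ) ≤ n := by exact_mod_cast le_of_max_le_right hn
  intro ζ
  have hsplit : f ζ + ε2 n - ζ - 2 * π ^ 2 * σ n / n ^ 3
      = (f ζ - ζ + π ^ 2 / n ^ 2) + (ε2 n - ((π : ℂ) ^ 2 / n ^ 2 + 2 * π ^ 2 * σ n / n ^ 3)) := by
    ring
  calc ‖f ζ + ε2 n - ζ - 2 * π ^ 2 * σ n / n ^ 3‖
      ≤ B / (n : ℝ) ^ 4 + C₁ / (n : ℝ) ^ ((3 : ℝ) + α) := by
        rw [hsplit]
        exact (norm_add_le _ _).trans (add_le_add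
          (norm_apply_sub_add_pi_sq_div_sq_le hC₀.le hexp hn1 hnr s) (hε n (le_of_max_le_left hn)))
    _ ≤ B / (n : ℝ) ^ ((3 : ℝ) + α) + C₁ / (n : ℝ) ^ ((3 : ℝ) + α) := by
        gcongr
        rw [← Real.rpow_natCast]
        exact Real.rpow_le_rpow_of_exponent_le hn1 (by push_cast; linarith)
    _ = (B + C₁) / (n : ℝ) ^ ((3 : ℝ) + α) := by ring

theorem approximate_fixed_point (f : ℂ → ℂ) (a : ℂ) (r C₀ : ℝ) (hr : 0 < r) (hC₀ : 0 < C₀)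
    (hf : DifferentiableOn ℂ f (Metric.ball 0 r))
    (hexp : ∀ w : ℂ, ‖w‖ < r → ‖f w - (w + w^2 + a * w^3)‖ ≤ C₀ * ‖w‖^4)
    (σ : ℕ → ℂ) (M : ℝ) (hσ : ∀ n, ‖σ n‖ ≤ M)
    (α : ℝ) (hα0 : 0 < α) (hα1 : α < 1)
    (ε2 : ℕ → ℂ) (C₁ : ℝ) (n₁ : ℕ)
    (hε : ∀ n ≥ n₁, ‖ε2 n - ((π : ℂ)^2 / n^2 + 2 * π^2 * σ n / n^3)‖ ≤ C₁ / (n : ℝ) ^ ((3 : ℝ) + α)) :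
    ∃ C : ℝ, ∃ n₀ : ℕ, ∀ n ≥ n₀, ∀ s : Bool,
      let ζ : ℂ := (if s then 1 else -1) * Complex.I * π / n + a * π^2 / (2 * n^2)
      ‖f ζ + ε2 n - ζ - 2 * π^2 * σ n / n^3‖ ≤ C / (n : ℝ) ^ ((3 : ℝ) + α) :=
  approximate_fixed_point_general f a r C₀ hr hC₀ hexp σ α hα1 ε2 C₁ n₁ hε
end
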